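/- arXiv:0803.1775 — 3 statements merged into one kernel-verified Lean document; each statement's English description precedes it below -/
import Mathlib

section
/- Let g: ℝ → [0,∞) be integrable and let ξ ∈ C²([0,t]) satisfy |ξ''(s)| ≤ g(ξ(s)) for all s ∈ [0,t]. If ξ'(s) ≠ 0 for all s ∈ (0,t), then |ξ'(t)² − ξ'(0)²| ≤ 2 ∫_ℝ g(r) dr, and hence |ξ'(t) − ξ'(0)| ≤ √(2 ∫_ℝ g). -/
open MeasureTheory Real

theorem velocity_change_bound (t : ℝ) (ht : 0 < t) (ξ ξ' ξ'' g : ℝ → ℝ)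
    (hd1 : ∀ s ∈ Set.Icc (0:ℝ) t, HasDerivAt ξ (ξ' s) s)
    (hd2 : ∀ s ∈ Set.Icc (0:ℝ) t, HasDerivAt ξ' (ξ'' s) s)
    (hcont : ContinuousOn ξ'' (Set.Icc 0 t))
    (hg0 : ∀ r, 0 ≤ g r) (hgint : Integrable g)
    (hbound : ∀ s ∈ Set.Icc (0:ℝ) t, |ξ'' s| ≤ g (ξ s))
    (hne : ∀ s ∈ Set.Ioo (0:ℝ) t, ξ' s ≠ 0) :
    |ξ' t ^ 2 - ξ' 0 ^ 2| ≤ 2 * (∫ r, g r) ∧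
      |ξ' t - ξ' 0| ≤ Real.sqrt (2 * (∫ r, g r)) := by
  have h0Icc : (0:ℝ) ∈ Set.Icc (0:ℝ) t := ⟨le_refl _, ht.le⟩
  have htIcc : t ∈ Set.Icc (0:ℝ) t := ⟨ht.le, le_refl _⟩
  have hc' : ContinuousOn ξ' (Set.Icc 0 t) :=
    fun s hs => (hd2 s hs).continuousAt.continuousWithinAt
  have hcξ : ContinuousOn ξ (Set.Icc 0 t) :=
    fun s hs => (hd1 s hs).continuousAt.continuousWithinAt
  have hm : (t/2) ∈ Set.Ioo (0:ℝ) t := ⟨by linarith, by linarith⟩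
  -- sign dichotomy for ξ' on the open interval
  have hsign : (∀ s ∈ Set.Ioo (0:ℝ) t, 0 < ξ' s) ∨ (∀ s ∈ Set.Ioo (0:ℝ) t, ξ' s < 0) := by
    rcases lt_or_gt_of_ne (hne _ hm) with hneg | hpos
    · right
      intro s hs
      by_contra h
      have hs' : 0 < ξ' s := lt_of_le_of_ne (not_lt.mp h) (Ne.symm (hne s hs))
      have hsub : Set.uIcc (t/2) s ⊆ Set.Ioo (0:ℝ) t :=
        Set.ordConnected_Ioo.uIcc_subset hm hs
      have hiv := intermediate_value_uIcc
        (hc'.mono (hsub.trans Set.Ioo_subset_Icc_self))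
      have h0 : (0:ℝ) ∈ Set.uIcc (ξ' (t/2)) (ξ' s) := by
        rw [Set.mem_uIcc]; left; exact ⟨hneg.le, hs'.le⟩
      obtain ⟨c, hc, hc0⟩ := hiv h0
      exact hne c (hsub hc) hc0
    · left
      intro s hs
      by_contra h
      have hs' : ξ' s < 0 := lt_of_le_of_ne (not_lt.mp h) (hne s hs)
      have hsub : Set.uIcc (t/2) s ⊆ Set.Ioo (0:ℝ) t :=
        Set.ordConnected_Ioo.uIcc_subset hm hs
      have hiv := intermediate_value_uIcc
        (hc'.mono (hsub.trans Set.Ioo_subset_Icc_self))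
      have h0 : (0:ℝ) ∈ Set.uIcc (ξ' (t/2)) (ξ' s) := by
        rw [Set.mem_uIcc]; right; exact ⟨hs'.le, hpos.le⟩
      obtain ⟨c, hc, hc0⟩ := hiv h0
      exact hne c (hsub hc) hc0
  -- endpoints sign via continuity
  have hlim0 : Filter.Tendsto ξ' (nhdsWithin 0 (Set.Ioo (0:ℝ) t)) (nhds (ξ' 0)) :=
    ((hd2 0 h0Icc).continuousAt.continuousWithinAt : ContinuousWithinAt ξ' (Set.Ioo 0 t) 0)
  have hlimt : Filter.Tendsto ξ' (nhdsWithin t (Set.Ioo (0:ℝ) t)) (nhds (ξ' t)) :=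
    ((hd2 t htIcc).continuousAt.continuousWithinAt : ContinuousWithinAt ξ' (Set.Ioo 0 t) t)
  have hNB0 : (nhdsWithin (0:ℝ) (Set.Ioo (0:ℝ) t)).NeBot := by
    refine mem_closure_iff_nhdsWithin_neBot.mp ?_
    rw [closure_Ioo ht.ne]
    exact h0Icc
  have hNBt : (nhdsWithin t (Set.Ioo (0:ℝ) t)).NeBot := by
    refine mem_closure_iff_nhdsWithin_neBot.mp ?_
    rw [closure_Ioo ht.ne]
    exact htIcc
  -- injectivity of ξ on the open interval, and sign of product at endpoints
  have hconv : Convex ℝ (Set.Icc (0:ℝ) t) := convex_Icc 0 t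
  have hderiv : ∀ x ∈ interior (Set.Icc (0:ℝ) t), deriv ξ x = ξ' x := by
    intro x hx
    rw [interior_Icc] at hx
    exact (hd1 x (Set.Ioo_subset_Icc_self hx)).deriv
  obtain ⟨hinj, hprod⟩ : Set.InjOn ξ (Set.Ioo 0 t) ∧ 0 ≤ ξ' 0 * ξ' t := by
    rcases hsign with hp | hn
    · constructor
      · have hmono : StrictMonoOn ξ (Set.Icc 0 t) := by
          apply strictMonoOn_of_deriv_pos hconv hcξ
          intro x hx
          rw [hderiv x hx]
          rw [interior_Icc] at hx
          exact hp x hx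
        exact (hmono.injOn).mono Set.Ioo_subset_Icc_self
      · have h1 : 0 ≤ ξ' 0 := by
          refine ge_of_tendsto hlim0 ?_
          filter_upwards [self_mem_nhdsWithin] with x hx using (hp x hx).le
        have h2 : 0 ≤ ξ' t := by
          refine ge_of_tendsto hlimt ?_
          filter_upwards [self_mem_nhdsWithin] with x hx using (hp x hx).le
        exact mul_nonneg h1 h2
    · constructor
      · have hmono : StrictAntiOn ξ (Set.Icc 0 t) := by
          apply strictAntiOn_of_deriv_neg hconv hcξ
          intro x hx
          rw [hderiv x hx]
          rw [interior_Icc] at hx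
          exact hn x hx
        exact (hmono.injOn).mono Set.Ioo_subset_Icc_self
      · have h1 : ξ' 0 ≤ 0 := by
          refine le_of_tendsto hlim0 ?_
          filter_upwards [self_mem_nhdsWithin] with x hx using (hn x hx).le
        have h2 : ξ' t ≤ 0 := by
          refine le_of_tendsto hlimt ?_
          filter_upwards [self_mem_nhdsWithin] with x hx using (hn x hx).le
        nlinarith
  -- fundamental theorem of calculus
  have hFTC : ∫ s in (0:ℝ)..t, 2 * ξ' s * ξ'' s = ξ' t ^ 2 - ξ' 0 ^ 2 := by
    apply intervalIntegral.integral_eq_sub_of_hasDerivAt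
    · intro x hx
      rw [Set.uIcc_of_le ht.le] at hx
      have h := (hd2 x hx).fun_pow 2
      convert h using 1
      push_cast
      · rfl
      · push_cast; ring
    · apply ContinuousOn.intervalIntegrable
      rw [Set.uIcc_of_le ht.le]
      exact (continuousOn_const.mul hc').mul hcont
  -- change of variables
  have hders : ∀ x ∈ Set.Ioo (0:ℝ) t, HasDerivWithinAt ξ (ξ' x) (Set.Ioo 0 t) x :=
    fun x hx => (hd1 x (Set.Ioo_subset_Icc_self hx)).hasDerivWithinAt
  have hCoV : ∫ s in Set.Ioo (0:ℝ) t, |ξ' s| • g (ξ s) = ∫ r in ξ '' Set.Ioo 0 t, g r :=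
    (integral_image_eq_integral_abs_deriv_smul measurableSet_Ioo hders hinj g).symm
  have hInt : IntegrableOn (fun s => |ξ' s| • g (ξ s)) (Set.Ioo 0 t) := by
    rw [← integrableOn_image_iff_integrableOn_abs_deriv_smul measurableSet_Ioo hders hinj]
    exact hgint.integrableOn
  have hInt1 : IntegrableOn (fun s => 2 * ξ' s * ξ'' s) (Set.Ioo 0 t) :=
    (((continuousOn_const.mul hc').mul hcont).integrableOn_Icc).mono_set
      Set.Ioo_subset_Icc_self
  have hA : 0 ≤ ∫ r, g r := integral_nonneg hg0
  have key : |ξ' t ^ 2 - ξ' 0 ^ 2| ≤ 2 * ∫ r, g r := by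
    rw [← hFTC, intervalIntegral.integral_of_le ht.le,
      MeasureTheory.integral_Ioc_eq_integral_Ioo]
    calc |∫ s in Set.Ioo (0:ℝ) t, 2 * ξ' s * ξ'' s|
        ≤ ∫ s in Set.Ioo (0:ℝ) t, |2 * ξ' s * ξ'' s| := by
          have := norm_integral_le_integral_norm
            (μ := volume.restrict (Set.Ioo (0:ℝ) t)) (fun s => 2 * ξ' s * ξ'' s)
          simpa only [Real.norm_eq_abs] using this
      _ ≤ ∫ s in Set.Ioo (0:ℝ) t, 2 * (|ξ' s| • g (ξ s)) := by
          apply setIntegral_mono_on hInt1.abs (hInt.const_mul 2) measurableSet_Ioo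
          intro s hs
          have hb := hbound s (Set.Ioo_subset_Icc_self hs)
          have h1 : |2 * ξ' s * ξ'' s| = 2 * (|ξ' s| * |ξ'' s|) := by
            rw [abs_mul, abs_mul]
            simp [abs_of_nonneg, mul_assoc]
          rw [h1, smul_eq_mul]
          have := mul_le_mul_of_nonneg_left hb (abs_nonneg (ξ' s))
          linarith
      _ = 2 * ∫ s in Set.Ioo (0:ℝ) t, |ξ' s| • g (ξ s) := by
          simp only [smul_eq_mul, mul_assoc]
          exact MeasureTheory.integral_const_mul 2 _
      _ = 2 * ∫ r in ξ '' Set.Ioo 0 t, g r := by rw [hCoV]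
      _ ≤ 2 * ∫ r, g r := by
          apply mul_le_mul_of_nonneg_left _ (by norm_num : (0:ℝ) ≤ 2)
          exact setIntegral_le_integral hgint (Filter.Eventually.of_forall hg0)
  refine ⟨key, ?_⟩
  have h1 : |ξ' t - ξ' 0| ≤ |ξ' t + ξ' 0| := by
    rw [← Real.sqrt_sq_eq_abs, ← Real.sqrt_sq_eq_abs]
    apply Real.sqrt_le_sqrt
    nlinarith
  have hsq : (ξ' t - ξ' 0) ^ 2 ≤ |ξ' t ^ 2 - ξ' 0 ^ 2| :=
    calc (ξ' t - ξ' 0) ^ 2 = |ξ' t - ξ' 0| * |ξ' t - ξ' 0| := by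
          rw [sq]; exact (abs_mul_abs_self _).symm
      _ ≤ |ξ' t - ξ' 0| * |ξ' t + ξ' 0| :=
          mul_le_mul_of_nonneg_left h1 (abs_nonneg _)
      _ = |(ξ' t - ξ' 0) * (ξ' t + ξ' 0)| := (abs_mul _ _).symm
      _ = |ξ' t ^ 2 - ξ' 0 ^ 2| := by congr 1; ring
  rw [← Real.sqrt_sq_eq_abs]
  exact Real.sqrt_le_sqrt (hsq.trans key)
end

section
/- Fix R > 0, 0 < k ≤ l, n = k+l+3/2. The linear operator T: L^{n,l}(ℝ³) → L²([0,R]) defined by (Tρ)(r) = m_ρ(r)/r is compact, where m_ρ(r) = ∫_{|x|≤r} ρ(x) dx. -/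
open MeasureTheory Real Filter

noncomputable section

abbrev E3 := EuclideanSpace ℝ (Fin 3)

def nrm (n l : ℝ) (ρ : E3 → ℝ) : ℝ :=
  (∫ x, |ρ x| ^ (1 + 1 / n) * ‖x‖ ^ (-(2 * l / n))) ^ (n / (n + 1))

def mfun (ρ : E3 → ℝ) (r : ℝ) : ℝ := ∫ x in Metric.closedBall (0 : E3) r, ρ x

namespace TCAux

lemma volume_singleton_zero : (volume : Measure E3) {0} = 0 := by
  have h := Measure.addHaar_closedBall (μ := (volume : Measure E3)) (0 : E3) (le_refl (0:ℝ))
  rw [Metric.closedBall_zero] at h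
  rw [h]
  simp [finrank_euclideanSpace_fin]

lemma mfun_zero (ρ : E3 → ℝ) : mfun ρ 0 = 0 := by
  unfold mfun
  rw [Metric.closedBall_zero, Measure.restrict_eq_zero.mpr volume_singleton_zero,
    integral_zero_measure]

/-- Equicontinuity from a uniform Hölder modulus. -/
lemma equi_of_holder {ι X : Type*} [PseudoMetricSpace X] {F : ι → X → ℝ} {C γ : ℝ}
    (hγ : 0 < γ) (hC : 0 ≤ C)
    (h : ∀ i x y, dist (F i x) (F i y) ≤ C * dist x y ^ γ) :
    Equicontinuous F := by
  intro x₀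
  rw [Metric.equicontinuousAt_iff]
  intro ε hε
  refine ⟨(ε / (C + 1)) ^ (1/γ), by positivity, fun x hx i => ?_⟩
  have h1 : dist (F i x₀) (F i x) ≤ C * dist x₀ x ^ γ := h i x₀ x
  have h2 : dist x₀ x ^ γ < ((ε / (C + 1)) ^ (1/γ)) ^ γ := by
    apply Real.rpow_lt_rpow dist_nonneg _ hγ
    rwa [dist_comm]
  have h3 : ((ε / (C + 1)) ^ (1/γ)) ^ γ = ε / (C + 1) := by
    rw [← Real.rpow_mul (by positivity), one_div, inv_mul_cancel₀ hγ.ne', Real.rpow_one]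
  have h4 : C * dist x₀ x ^ γ ≤ C * (ε / (C + 1)) := by
    rw [← h3]
    exact mul_le_mul_of_nonneg_left h2.le hC
  have h5 : C * (ε / (C + 1)) < ε := by
    have hc1 : 0 < C + 1 := by linarith
    calc C * (ε / (C + 1)) < (C + 1) * (ε / (C + 1)) := by
          apply mul_lt_mul_of_pos_right _ (by positivity)
          linarith
      _ = ε := by field_simp
  linarith

/-- The abstract Hölder-modulus estimate for `r ↦ m r / r`. -/
lemma holder_modulus {q α K Rb : ℝ} (hq : 1 ≤ q) (hα : 0 < α) (hK : 0 ≤ K) (hRb : 0 < Rb)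
    (m : ℝ → ℝ)
    (h1 : ∀ r, 0 ≤ r → r ≤ Rb → |m r| ≤ K * r ^ (α + 1))
    (h2 : ∀ r' r, 0 ≤ r' → r' ≤ r → r ≤ Rb →
      |m r - m r'| ≤ K * (r ^ (α + 1 - 1/q) * (r - r') ^ (1/q)))
    {r' r : ℝ} (hr0 : 0 ≤ r') (hr : r' ≤ r) (hrR : r ≤ Rb) :
    |m r / r - m r' / r'| ≤
      8 * K * Rb ^ (α - min α (1/q)) * (r - r') ^ (min α (1/q)) := by
  set γ := min α (1/q) with hγdef
  have hq0 : 0 < q := lt_of_lt_of_le one_pos hq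
  have hγ0 : 0 < γ := lt_min hα (by positivity)
  have hγα : γ ≤ α := min_le_left _ _
  have hγq : γ ≤ 1/q := min_le_right _ _
  have hγ1 : γ ≤ 1 := hγq.trans (by rw [div_le_one hq0]; exact hq)
  have hRγ : (0:ℝ) ≤ Rb ^ (α - γ) := Real.rpow_nonneg hRb.le _
  have split : ∀ x : ℝ, 0 ≤ x → x ≤ Rb → x ^ α ≤ Rb ^ (α - γ) * x ^ γ := by
    intro x hx hxR
    rcases eq_or_lt_of_le hx with h | h
    · rw [← h, Real.zero_rpow hα.ne', Real.zero_rpow hγ0.ne', mul_zero]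
    · have hx' : x ^ α = x ^ (α - γ) * x ^ γ := by
        rw [← Real.rpow_add h]; ring_nf
      rw [hx']
      exact mul_le_mul_of_nonneg_right
        (Real.rpow_le_rpow hx hxR (by linarith)) (Real.rpow_nonneg hx _)
  rcases eq_or_lt_of_le hr with heq | hlt
  · rw [heq, sub_self, abs_zero, sub_self, Real.zero_rpow hγ0.ne', mul_zero]
  set d := r - r' with hddef
  have hd : 0 < d := by simp only [hddef]; linarith
  have hFA : ∀ x, 0 < x → x ≤ Rb → |m x / x| ≤ K * x ^ α := by
    intro x hx hxR
    rw [abs_div, abs_of_pos hx]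
    have hb := h1 x hx.le hxR
    have hx1 : x ^ (α + 1) = x ^ α * x := Real.rpow_add_one hx.ne' α
    rw [hx1] at hb
    rw [div_le_iff₀ hx]
    calc |m x| ≤ K * (x ^ α * x) := hb
      _ = K * x ^ α * x := by ring
  rcases eq_or_lt_of_le hr0 with h0 | h0
  · -- r' = 0
    have hrpos : 0 < r := by linarith
    rw [← h0, div_zero, sub_zero]
    have hdr : d = r := by rw [hddef, ← h0, sub_zero]
    rw [hdr]
    have := hFA r hrpos hrR
    have hs := split r hrpos.le hrR
    have hdγ : (0:ℝ) ≤ r ^ γ := Real.rpow_nonneg hrpos.le _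
    nlinarith [mul_nonneg (mul_nonneg hK hRγ) hdγ]
  · -- 0 < r'
    have hrpos : 0 < r := lt_of_lt_of_le h0 hr
    have hr'R : r' ≤ Rb := le_trans hr hrR
    have hdγ : (0:ℝ) ≤ d ^ γ := Real.rpow_nonneg hd.le _
    by_cases hd2 : r'/2 ≤ d
    · -- d large : use pointwise bounds
      have h3d : r ≤ 3 * d := by simp only [hddef] at hd2 ⊢; linarith
      have hA := hFA r hrpos hrR
      have hB := hFA r' h0 hr'R
      have htri : |m r / r - m r' / r'| ≤ |m r / r| + |m r' / r'| := abs_sub _ _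
      have hr'α : r' ^ α ≤ r ^ α := Real.rpow_le_rpow hr0 hr hα.le
      have hsplit := split r hrpos.le hrR
      have hrγ : r ^ γ ≤ 3 ^ γ * d ^ γ := by
        rw [← Real.mul_rpow (by norm_num) hd.le]
        exact Real.rpow_le_rpow hrpos.le h3d hγ0.le
      have h3γ : (3:ℝ) ^ γ ≤ 3 := by
        calc (3:ℝ) ^ γ ≤ 3 ^ (1:ℝ) := Real.rpow_le_rpow_of_exponent_le (by norm_num) hγ1
          _ = 3 := Real.rpow_one 3
      have h3γ0 : (0:ℝ) ≤ 3 ^ γ := Real.rpow_nonneg (by norm_num) _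
      have hchain : |m r / r - m r' / r'| ≤ 2 * (K * r ^ α) := by
        calc |m r / r - m r' / r'| ≤ |m r / r| + |m r' / r'| := htri
          _ ≤ K * r ^ α + K * r' ^ α := add_le_add hA hB
          _ ≤ K * r ^ α + K * r ^ α := by
              exact add_le_add le_rfl (mul_le_mul_of_nonneg_left hr'α hK)
          _ = 2 * (K * r ^ α) := by ring
      have hfin : r ^ α ≤ Rb ^ (α - γ) * (3 ^ γ * d ^ γ) :=
        hsplit.trans (mul_le_mul_of_nonneg_left hrγ hRγ)
      calc |m r / r - m r' / r'| ≤ 2 * (K * r ^ α) := hchain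
        _ ≤ 2 * (K * (Rb ^ (α - γ) * (3 ^ γ * d ^ γ))) := by
            have := mul_le_mul_of_nonneg_left hfin hK
            linarith
        _ ≤ 8 * K * Rb ^ (α - γ) * d ^ γ := by
            nlinarith [mul_nonneg (mul_nonneg hK hRγ) hdγ, h3γ, h3γ0]
    · -- d small
      push_neg at hd2
      have hid : m r / r - m r' / r' = (m r - m r') / r - m r' * d / (r * r') := by
        simp only [hddef]
        field_simp
        ring
      have htri : |m r / r - m r' / r'| ≤ |(m r - m r') / r| + |m r' * d / (r * r')| := by
        rw [hid]; exact abs_sub _ _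
      -- Term 1
      have hT1 : |(m r - m r') / r| ≤ K * (Rb ^ (α - γ) * d ^ γ) := by
        rw [abs_div, abs_of_pos hrpos, div_le_iff₀ hrpos]
        have hb := h2 r' r hr0 hr hrR
        have he : α + 1 - 1/q = (α - 1/q) + 1 := by ring
        rw [he, Real.rpow_add_one hrpos.ne'] at hb
        have hdr1 : d / r ≤ 1 := by
          rw [div_le_one hrpos]; rw [hddef]; linarith
        have hdr0 : 0 < d / r := div_pos hd hrpos
        have hmono : (d / r) ^ (1/q) ≤ (d / r) ^ γ :=
          Real.rpow_le_rpow_of_exponent_ge hdr0 hdr1 hγq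
        have hrα : (0:ℝ) ≤ r ^ α := Real.rpow_nonneg hrpos.le _
        have heq1 : r ^ (α - 1/q) * r * d ^ (1/q) = r ^ α * (d / r) ^ (1/q) * r := by
          rw [Real.div_rpow hd.le hrpos.le, Real.rpow_sub hrpos]
          field_simp
        have heq2 : r ^ α * (d / r) ^ γ = r ^ (α - γ) * d ^ γ := by
          rw [Real.div_rpow hd.le hrpos.le, Real.rpow_sub hrpos]
          field_simp
        have hrA : r ^ (α - γ) ≤ Rb ^ (α - γ) :=
          Real.rpow_le_rpow hrpos.le hrR (by linarith)
        have hXb : r ^ α * (d / r) ^ (1/q) ≤ Rb ^ (α - γ) * d ^ γ := by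
          have s1 : r ^ α * (d / r) ^ (1/q) ≤ r ^ α * (d / r) ^ γ :=
            mul_le_mul_of_nonneg_left hmono hrα
          rw [heq2] at s1
          exact s1.trans (mul_le_mul_of_nonneg_right hrA hdγ)
        calc |m r - m r'| ≤ K * (r ^ (α - 1/q) * r * d ^ (1/q)) := hb
          _ = K * (r ^ α * (d / r) ^ (1/q) * r) := by rw [heq1]
          _ ≤ K * (Rb ^ (α - γ) * d ^ γ * r) := by
              exact mul_le_mul_of_nonneg_left
                (mul_le_mul_of_nonneg_right hXb hrpos.le) hK
          _ = K * (Rb ^ (α - γ) * d ^ γ) * r := by ring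
      -- Term 2
      have hT2 : |m r' * d / (r * r')| ≤ K * (Rb ^ (α - γ) * d ^ γ) := by
        rw [abs_div, abs_mul, abs_of_pos hd, abs_of_pos (mul_pos hrpos h0),
          div_le_iff₀ (mul_pos hrpos h0)]
        have hb := h1 r' hr0 hr'R
        rw [Real.rpow_add_one (ne_of_gt h0)] at hb
        have hdr'1 : d / r' ≤ 1 := by rw [div_le_one h0]; linarith
        have hdr'0 : 0 < d / r' := div_pos hd h0
        have hmono : d / r' ≤ (d / r') ^ γ := by
          calc d / r' = (d / r') ^ (1:ℝ) := (Real.rpow_one _).symm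
            _ ≤ (d / r') ^ γ := Real.rpow_le_rpow_of_exponent_ge hdr'0 hdr'1 hγ1
        have heq2 : r' ^ α * (d / r') ^ γ = r' ^ (α - γ) * d ^ γ := by
          rw [Real.div_rpow hd.le h0.le, Real.rpow_sub h0]
          field_simp
        have hr'A : r' ^ (α - γ) ≤ Rb ^ (α - γ) :=
          Real.rpow_le_rpow h0.le hr'R (by linarith)
        have hr'α : (0:ℝ) ≤ r' ^ α := Real.rpow_nonneg h0.le _
        have hstep2 : r' ^ α * (d / r') ≤ r' ^ (α - γ) * d ^ γ := by
          have := mul_le_mul_of_nonneg_left hmono hr'α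
          rw [heq2] at this
          exact this
        have hrr' : (0:ℝ) ≤ r' * r' := mul_nonneg h0.le h0.le
        have key : |m r'| * d ≤ K * (r' ^ (α - γ) * d ^ γ) * (r' * r') := by
          calc |m r'| * d ≤ K * (r' ^ α * r') * d :=
                mul_le_mul_of_nonneg_right hb hd.le
            _ = K * (r' ^ α * (d / r')) * (r' * r') := by field_simp
            _ ≤ K * (r' ^ (α - γ) * d ^ γ) * (r' * r') :=
                mul_le_mul_of_nonneg_right (mul_le_mul_of_nonneg_left hstep2 hK) hrr'
        calc |m r'| * d ≤ K * (r' ^ (α - γ) * d ^ γ) * (r' * r') := key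
          _ ≤ K * (Rb ^ (α - γ) * d ^ γ) * (r' * r') :=
              mul_le_mul_of_nonneg_right
                (mul_le_mul_of_nonneg_left (mul_le_mul_of_nonneg_right hr'A hdγ) hK) hrr'
          _ ≤ K * (Rb ^ (α - γ) * d ^ γ) * (r * r') := by
              have h2' : r' * r' ≤ r * r' := mul_le_mul_of_nonneg_right hr h0.le
              exact mul_le_mul_of_nonneg_left h2'
                (mul_nonneg hK (mul_nonneg hRγ hdγ))
      calc |m r / r - m r' / r'| ≤ |(m r - m r') / r| + |m r' * d / (r * r')| := htri
        _ ≤ K * (Rb ^ (α - γ) * d ^ γ) + K * (Rb ^ (α - γ) * d ^ γ) := add_le_add hT1 hT2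
        _ ≤ 8 * K * Rb ^ (α - γ) * d ^ γ := by
            nlinarith [mul_nonneg (mul_nonneg hK hRγ) hdγ]


/-- Core Hölder estimate on the mass difference. -/
lemma core (k l B : ℝ) (hk : 0 < k) (hkl : k ≤ l) (hB : 0 < B)
    (ρ : E3 → ℝ) (hm : Measurable ρ)
    (hint : Integrable
      (fun x => |ρ x| ^ (1 + 1 / (k + l + 3/2)) * ‖x‖ ^ (-(2 * l / (k + l + 3/2)))))
    (hnrm : nrm (k + l + 3/2) l ρ ≤ B) (r r' : ℝ) (hr0 : 0 ≤ r') (hr : r' ≤ r) :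
    |mfun ρ r - mfun ρ r'| ≤
      B * (r ^ (2*l) * ((r^3 - r'^3) * (volume (Metric.ball (0:E3) 1)).toReal))
        ^ (1/(k + l + 3/2 + 1)) := by
  set n := k + l + 3/2 with hn
  have hl : 0 < l := lt_of_lt_of_le hk hkl
  have hn0 : 0 < n := by rw [hn]; linarith
  set q := n + 1 with hqdef
  have hq0 : 0 < q := by rw [hqdef]; linarith
  have hr0' : 0 ≤ r := le_trans hr0 hr
  have hr3 : r'^3 ≤ r^3 := pow_le_pow_left₀ hr0 hr 3
  have hpq : (1 + 1/n).HolderConjugate q := by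
    rw [Real.holderConjugate_iff]
    constructor
    · have : 0 < 1/n := by positivity
      linarith
    · rw [hqdef]; field_simp
  set V := (volume : Measure E3) (Metric.ball (0:E3) 1) with hV
  have hVtop : V ≠ ⊤ := measure_ball_lt_top.ne
  set v := V.toReal with hv
  have hv0 : 0 ≤ v := ENNReal.toReal_nonneg
  set w : E3 → ENNReal := fun x => ENNReal.ofReal (|ρ x| * ‖x‖ ^ (-(2*l/q))) with hw
  set u : E3 → ENNReal := fun x => ENNReal.ofReal (‖x‖ ^ (2*l/q)) with hu
  have hwm : Measurable w := by
    apply ENNReal.measurable_ofReal.comp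
    fun_prop
  have hum : Measurable u := by
    apply ENNReal.measurable_ofReal.comp
    fun_prop
  have hInn : 0 ≤ᵐ[volume] fun x : E3 => |ρ x| ^ (1 + 1/n) * ‖x‖ ^ (-(2*l/n)) :=
    Filter.Eventually.of_forall (fun x => by positivity)
  simp only [nrm] at hnrm
  set I := ∫ x : E3, |ρ x| ^ (1 + 1/n) * ‖x‖ ^ (-(2*l/n)) with hI
  have hI0 : 0 ≤ I := integral_nonneg fun x => by positivity
  have hwp : ∀ x : E3,
      w x ^ (1 + 1/n) = ENNReal.ofReal (|ρ x| ^ (1 + 1/n) * ‖x‖ ^ (-(2*l/n))) := by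
    intro x
    rw [hw]
    rw [ENNReal.ofReal_rpow_of_nonneg (by positivity) (by positivity)]
    congr 1
    rw [Real.mul_rpow (abs_nonneg _) (Real.rpow_nonneg (norm_nonneg _) _)]
    congr 1
    rw [← Real.rpow_mul (norm_nonneg x)]
    congr 1
    rw [hqdef]; field_simp
  have hlp : ∫⁻ x : E3, w x ^ (1 + 1/n) = ENNReal.ofReal I := by
    simp_rw [hwp]
    exact (MeasureTheory.ofReal_integral_eq_lintegral_ofReal hint hInn).symm
  have hlpB : (∫⁻ x : E3, w x ^ (1 + 1/n)) ^ (1/(1 + 1/n)) ≤ ENNReal.ofReal B := by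
    rw [hlp, ENNReal.ofReal_rpow_of_nonneg hI0 (by positivity)]
    apply ENNReal.ofReal_le_ofReal
    have heq : 1/(1 + 1/n) = n/(n + 1) := by field_simp
    rw [heq]
    exact hnrm
  have hs_est : ∀ s : Set E3, MeasurableSet s → s ⊆ Metric.closedBall 0 r →
      ∫⁻ x in s, ENNReal.ofReal |ρ x| ≤
        ENNReal.ofReal B * (ENNReal.ofReal (r ^ (2*l)) * volume s) ^ (1/q) := by
    intro s hsm hsub
    have h0 : ∀ᵐ x : E3 ∂volume, x ≠ 0 := by
      rw [ae_iff]
      have hset : {x : E3 | ¬ x ≠ 0} = {0} := by ext y; simp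
      rw [hset]; exact volume_singleton_zero
    have hae : ∀ᵐ x ∂(volume.restrict s), ENNReal.ofReal |ρ x| = w x * u x := by
      refine ae_restrict_of_ae (h0.mono fun x hx => ?_)
      rw [hw, hu]
      simp only
      rw [← ENNReal.ofReal_mul (by positivity)]
      congr 1
      rw [mul_assoc, ← Real.rpow_add (norm_pos_iff.mpr hx)]
      simp
    rw [lintegral_congr_ae hae]
    have hold := ENNReal.lintegral_mul_le_Lp_mul_Lq (volume.restrict s) hpq
      hwm.aemeasurable hum.aemeasurable
    simp only [Pi.mul_apply] at hold
    refine le_trans hold ?_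
    have hf1 : (∫⁻ x in s, w x ^ (1 + 1/n)) ^ (1/(1 + 1/n)) ≤ ENNReal.ofReal B := by
      refine le_trans ?_ hlpB
      apply ENNReal.rpow_le_rpow _ (by positivity)
      exact setLIntegral_le_lintegral _ _
    have hf2 : (∫⁻ x in s, u x ^ q) ^ (1/q) ≤
        (ENNReal.ofReal (r ^ (2*l)) * volume s) ^ (1/q) := by
      apply ENNReal.rpow_le_rpow _ (by positivity)
      have hux : ∀ x ∈ s, u x ^ q ≤ ENNReal.ofReal (r ^ (2*l)) := by
        intro x hxs
        rw [hu]
        simp only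
        rw [ENNReal.ofReal_rpow_of_nonneg (Real.rpow_nonneg (norm_nonneg _) _) hq0.le,
          ← Real.rpow_mul (norm_nonneg x)]
        have he : 2*l/q*q = 2*l := by field_simp
        rw [he]
        apply ENNReal.ofReal_le_ofReal
        apply Real.rpow_le_rpow (norm_nonneg _) _ (by positivity)
        have hmem := hsub hxs
        rwa [Metric.mem_closedBall, dist_zero_right] at hmem
      calc ∫⁻ x in s, u x ^ q ≤ ∫⁻ _ in s, ENNReal.ofReal (r ^ (2*l)) :=
            setLIntegral_mono' hsm hux
        _ = ENNReal.ofReal (r ^ (2*l)) * volume s := by rw [setLIntegral_const]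
    exact mul_le_mul' hf1 hf2
  have hIntOn : ∀ s : Set E3, MeasurableSet s → s ⊆ Metric.closedBall 0 r →
      IntegrableOn ρ s := by
    intro s hsm hsub
    refine ⟨hm.aestronglyMeasurable.restrict, ?_⟩
    rw [hasFiniteIntegral_iff_norm]
    simp only [Real.norm_eq_abs]
    refine lt_of_le_of_lt (hs_est s hsm hsub) ?_
    refine ENNReal.mul_lt_top ENNReal.ofReal_lt_top ?_
    apply ENNReal.rpow_lt_top_of_nonneg (by positivity)
    exact ENNReal.mul_ne_top ENNReal.ofReal_ne_top
      ((measure_mono hsub).trans_lt measure_closedBall_lt_top).ne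
  have hIr : IntegrableOn ρ (Metric.closedBall (0:E3) r) :=
    hIntOn _ measurableSet_closedBall (subset_refl _)
  have hdiff : mfun ρ r - mfun ρ r' =
      ∫ x in Metric.closedBall (0:E3) r \ Metric.closedBall (0:E3) r', ρ x := by
    unfold mfun
    rw [integral_diff measurableSet_closedBall hIr
      (Metric.closedBall_subset_closedBall hr)]
  set sdiff := Metric.closedBall (0:E3) r \ Metric.closedBall (0:E3) r' with hsd
  have hfin3 : Module.finrank ℝ E3 = 3 := finrank_euclideanSpace_fin
  have hvolcb : ∀ t : ℝ, 0 ≤ t →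
      volume (Metric.closedBall (0:E3) t) = ENNReal.ofReal (t^3) * V := by
    intro t ht
    rw [Measure.addHaar_closedBall (volume : Measure E3) (0:E3) ht, hfin3, hV]
  have hvs : volume sdiff = ENNReal.ofReal (r^3 - r'^3) * V := by
    rw [hsd, measure_diff (Metric.closedBall_subset_closedBall hr)
      measurableSet_closedBall.nullMeasurableSet
      measure_closedBall_lt_top.ne,
      hvolcb r hr0', hvolcb r' hr0, ← ENNReal.sub_mul (fun _ _ => hVtop),
      ← ENNReal.ofReal_sub _ (by positivity)]
  have hmain := hs_est sdiff (measurableSet_closedBall.diff measurableSet_closedBall)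
    Set.diff_subset
  rw [hvs] at hmain
  have hinnn : (0:ℝ) ≤ r ^ (2*l) * ((r^3 - r'^3) * v) :=
    mul_nonneg (Real.rpow_nonneg hr0' _) (mul_nonneg (by linarith) hv0)
  have hrw : ENNReal.ofReal B * (ENNReal.ofReal (r ^ (2*l)) *
      (ENNReal.ofReal (r^3 - r'^3) * V)) ^ (1/q) =
      ENNReal.ofReal (B * (r ^ (2*l) * ((r^3 - r'^3) * v)) ^ (1/q)) := by
    rw [← ENNReal.ofReal_toReal hVtop, ← hv,
      ← ENNReal.ofReal_mul (by linarith : (0:ℝ) ≤ r^3 - r'^3),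
      ← ENNReal.ofReal_mul (Real.rpow_nonneg hr0' _),
      ENNReal.ofReal_rpow_of_nonneg hinnn (by positivity),
      ← ENNReal.ofReal_mul hB.le]
  rw [hrw] at hmain
  have habs : |mfun ρ r - mfun ρ r'| ≤ ∫ x in sdiff, |ρ x| := by
    rw [hdiff]
    calc |∫ x in sdiff, ρ x| = ‖∫ x in sdiff, ρ x‖ := (Real.norm_eq_abs _).symm
      _ ≤ ∫ x in sdiff, ‖ρ x‖ := norm_integral_le_integral_norm _
      _ = ∫ x in sdiff, |ρ x| := by simp [Real.norm_eq_abs]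
  have hlint : ∫ x in sdiff, |ρ x| = (∫⁻ x in sdiff, ENNReal.ofReal |ρ x|).toReal := by
    rw [integral_eq_lintegral_of_nonneg_ae
      (Filter.Eventually.of_forall fun x => abs_nonneg _)
      (hm.abs.aestronglyMeasurable.restrict)]
  rw [hlint] at habs
  refine habs.trans ?_
  exact ENNReal.toReal_le_of_le_ofReal
    (mul_nonneg hB.le (Real.rpow_nonneg hinnn _)) hmain

end TCAux

set_option maxHeartbeats 2000000 in
/-- Compactness of `T : L^{n,l}(ℝ³) → L²([0,R])`, `(Tρ)(r) = m_ρ(r)/r`: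
every norm-bounded sequence has a subsequence whose image converges in `L²([0,R])`. -/
theorem T_compact (k l R B : ℝ) (hk : 0 < k) (hkl : k ≤ l) (hR : 0 < R) (hB : 0 < B) :
    ∀ (ρ : ℕ → E3 → ℝ), (∀ j, Measurable (ρ j)) →
      (∀ j (A : E3 ≃ₗᵢ[ℝ] E3) (x : E3), ρ j (A x) = ρ j x) →
      (∀ j, Integrable
        (fun x => |ρ j x| ^ (1 + 1 / (k + l + 3/2)) * ‖x‖ ^ (-(2 * l / (k + l + 3/2))))) →
      (∀ j, nrm (k + l + 3/2) l (ρ j) ≤ B) →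
      ∃ (φ : ℕ → ℕ) (g : ℝ → ℝ), StrictMono φ ∧
        Tendsto (fun j => ∫ r in Set.Ioc (0:ℝ) R, (mfun (ρ (φ j)) r / r - g r) ^ 2)
          atTop (nhds 0) := by
  intro ρ hmeas hsym hint hnrm
  clear hsym
  have hl : 0 < l := lt_of_lt_of_le hk hkl
  set q := k + l + 3/2 + 1 with hqdef
  have hq0 : 0 < q := by rw [hqdef]; linarith
  have hq1 : 1 ≤ q := by rw [hqdef]; linarith
  set v := ((volume : Measure E3) (Metric.ball (0:E3) 1)).toReal with hv
  have hv0 : 0 ≤ v := ENNReal.toReal_nonneg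
  set α := (2*l + 3)/q - 1 with hα
  have hα0 : 0 < α := by
    rw [hα]
    have h1 : 1 < (2*l + 3)/q := by
      rw [lt_div_iff₀ hq0, hqdef]; linarith
    linarith
  set K0 := B * v ^ (1/q) with hK0
  have hK00 : 0 ≤ K0 := mul_nonneg hB.le (Real.rpow_nonneg hv0 _)
  have h3q0 : (0:ℝ) ≤ 3 ^ (1/q) := Real.rpow_nonneg (by norm_num) _
  set K := K0 * (1 + 3 ^ (1/q)) with hK
  have hK0' : 0 ≤ K := mul_nonneg hK00 (by linarith)
  -- the two quantitative bounds on mfun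
  have h1j : ∀ j r, 0 ≤ r → r ≤ R → |mfun (ρ j) r| ≤ K * r ^ (α + 1) := by
    intro j r hr0 hrR
    have hb := TCAux.core k l B hk hkl hB (ρ j) (hmeas j) (hint j) (hnrm j) r 0 le_rfl hr0
    rw [TCAux.mfun_zero, sub_zero] at hb
    rw [← hqdef, ← hv] at hb
    refine hb.trans ?_
    have hz : ((0:ℝ))^3 = 0 := by norm_num
    rw [hz, sub_zero] at hb ⊢
    have e2 : r ^ (2*l) * r ^ (3:ℝ) = r ^ (2*l + 3) :=
      (Real.rpow_add' hr0 (ne_of_gt (by linarith))).symm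
    have e1 : r ^ (2*l) * (r^3 * v) = r ^ (2*l + 3) * v := by
      rw [← e2, ← Real.rpow_natCast r 3]
      push_cast
      ring
    have e3 : (r ^ (2*l + 3) * v) ^ (1/q) = r ^ (α+1) * v ^ (1/q) := by
      rw [Real.mul_rpow (Real.rpow_nonneg hr0 _) hv0, ← Real.rpow_mul hr0]
      congr 2
      rw [hα]; ring
    calc B * (r ^ (2*l) * (r^3 * v)) ^ (1/q) = B * (r ^ (α+1) * v ^ (1/q)) := by
          rw [e1, e3]
      _ = K0 * r ^ (α+1) := by rw [hK0]; ring
      _ ≤ K * r ^ (α+1) := by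
          apply mul_le_mul_of_nonneg_right _ (Real.rpow_nonneg hr0 _)
          rw [hK]; nlinarith [h3q0, hK00]
  have h2j : ∀ j r' r, 0 ≤ r' → r' ≤ r → r ≤ R →
      |mfun (ρ j) r - mfun (ρ j) r'| ≤ K * (r ^ (α + 1 - 1/q) * (r - r') ^ (1/q)) := by
    intro j r' r hr0' hrr hrR
    have hr0 : 0 ≤ r := le_trans hr0' hrr
    have hb := TCAux.core k l B hk hkl hB (ρ j) (hmeas j) (hint j) (hnrm j) r r' hr0' hrr
    rw [← hqdef, ← hv] at hb
    refine hb.trans ?_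
    have hd0 : 0 ≤ r - r' := by linarith
    have hr3 : r'^3 ≤ r^3 := pow_le_pow_left₀ hr0' hrr 3
    have hcube : r^3 - r'^3 ≤ 3 * r^2 * (r - r') := by
      nlinarith [mul_nonneg (mul_nonneg hd0 hd0) (by linarith : (0:ℝ) ≤ 2*r + r')]
    have hmono : (r ^ (2*l) * ((r^3 - r'^3) * v)) ^ (1/q)
        ≤ (r ^ (2*l) * ((3 * r^2 * (r - r')) * v)) ^ (1/q) := by
      apply Real.rpow_le_rpow
      · exact mul_nonneg (Real.rpow_nonneg hr0 _)
          (mul_nonneg (by linarith) hv0)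
      · apply mul_le_mul_of_nonneg_left _ (Real.rpow_nonneg hr0 _)
        exact mul_le_mul_of_nonneg_right hcube hv0
      · positivity
    have e2 : r ^ (2*l) * r ^ (2:ℝ) = r ^ (2*l + 2) :=
      (Real.rpow_add' hr0 (ne_of_gt (by linarith))).symm
    have e1 : r ^ (2*l) * ((3 * r^2 * (r - r')) * v) = (r ^ (2*l+2)) * ((3*v) * (r - r')) := by
      rw [← e2, ← Real.rpow_natCast r 2]
      push_cast
      ring
    have e3 : ((r ^ (2*l+2)) * ((3*v) * (r - r'))) ^ (1/q)
        = r ^ (α + 1 - 1/q) * ((3*v) ^ (1/q) * (r - r') ^ (1/q)) := by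
      rw [Real.mul_rpow (Real.rpow_nonneg hr0 _) (mul_nonneg (by positivity) hd0),
        Real.mul_rpow (by positivity) hd0, ← Real.rpow_mul hr0]
      congr 2
      rw [hα]
      field_simp
      ring
    have e4 : ((3:ℝ)*v) ^ (1/q) = 3 ^ (1/q) * v ^ (1/q) := Real.mul_rpow (by norm_num) hv0
    calc B * (r ^ (2*l) * ((r^3 - r'^3) * v)) ^ (1/q)
        ≤ B * (r ^ (2*l) * ((3 * r^2 * (r - r')) * v)) ^ (1/q) :=
          mul_le_mul_of_nonneg_left hmono hB.le
      _ = K0 * 3 ^ (1/q) * (r ^ (α + 1 - 1/q) * (r - r') ^ (1/q)) := by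
          rw [e1, e3, e4, hK0]; ring
      _ ≤ K * (r ^ (α + 1 - 1/q) * (r - r') ^ (1/q)) := by
          apply mul_le_mul_of_nonneg_right _
            (mul_nonneg (Real.rpow_nonneg hr0 _) (Real.rpow_nonneg hd0 _))
          rw [hK]; nlinarith [hK00, h3q0]
  -- uniform Hölder modulus for r ↦ mfun ρ r / r
  set γ := min α (1/q) with hγ
  have hγ0 : 0 < γ := lt_min hα0 (by positivity)
  set C := 8 * K * R ^ (α - γ) with hC
  have hC0 : 0 ≤ C := by
    rw [hC]
    have := Real.rpow_nonneg hR.le (α - γ)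
    nlinarith [hK0']
  have hmod : ∀ j r' r, 0 ≤ r' → r' ≤ r → r ≤ R →
      |mfun (ρ j) r / r - mfun (ρ j) r' / r'| ≤ C * (r - r') ^ γ := by
    intro j r' r ha hb hc
    exact TCAux.holder_modulus hq1 hα0 hK0' hR (mfun (ρ j)) (h1j j) (h2j j) ha hb hc
  have hmod' : ∀ j a b, a ∈ Set.Icc (0:ℝ) R → b ∈ Set.Icc (0:ℝ) R →
      |mfun (ρ j) a / a - mfun (ρ j) b / b| ≤ C * |a - b| ^ γ := by
    intro j a b ha hb
    rcases le_total b a with h | h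
    · rw [abs_of_nonneg (by linarith : (0:ℝ) ≤ a - b)]
      exact hmod j b a hb.1 h ha.2
    · rw [abs_sub_comm (mfun (ρ j) a / a), abs_sub_comm a b,
        abs_of_nonneg (by linarith : (0:ℝ) ≤ b - a)]
      exact hmod j a b ha.1 h hb.2
  -- the family as bounded continuous functions on Icc 0 R
  set X := Set.Icc (0:ℝ) R with hX
  set Fm : ℕ → X → ℝ := fun j x => mfun (ρ j) x.1 / x.1 with hFm
  have hdistb : ∀ j (x y : X), dist (Fm j x) (Fm j y) ≤ C * dist x y ^ γ := by
    intro j x y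
    rw [Real.dist_eq, Subtype.dist_eq, Real.dist_eq]
    exact hmod' j x.1 y.1 x.2 y.2
  have hequi : Equicontinuous Fm := TCAux.equi_of_holder hγ0 hC0 hdistb
  have hFmcont : ∀ j, Continuous (Fm j) := fun j => hequi.continuous j
  set G : ℕ → BoundedContinuousFunction X ℝ :=
    fun j => BoundedContinuousFunction.mkOfCompact ⟨Fm j, hFmcont j⟩ with hG
  have hGapp : ∀ j (x : X), G j x = Fm j x := fun j x => rfl
  have h0X : (0:ℝ) ∈ Set.Icc (0:ℝ) R := ⟨le_refl _, hR.le⟩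
  set M := C * R ^ γ with hM
  have hbnd : ∀ j (x : X), Fm j x ∈ Set.Icc (-M) M := by
    intro j x
    have h := hmod' j x.1 0 x.2 h0X
    rw [div_zero, sub_zero, sub_zero, abs_of_nonneg x.2.1] at h
    have h2 : C * (x.1:ℝ) ^ γ ≤ M := by
      rw [hM]
      exact mul_le_mul_of_nonneg_left (Real.rpow_le_rpow x.2.1 x.2.2 hγ0.le) hC0
    have h3 : |Fm j x| ≤ M := le_trans h h2
    rw [abs_le] at h3
    exact ⟨h3.1, h3.2⟩
  have hcomp : IsCompact (closure (Set.range G)) := by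
    apply BoundedContinuousFunction.arzela_ascoli (Set.Icc (-M) M) isCompact_Icc
    · intro f x hf
      obtain ⟨j, rfl⟩ := hf
      exact hbnd j x
    · apply TCAux.equi_of_holder hγ0 hC0
      rintro ⟨f, j, rfl⟩ x y
      exact hdistb j x y
  obtain ⟨g0, hg0mem, φ, hφ, hconv⟩ :=
    hcomp.tendsto_subseq (fun j => subset_closure (Set.mem_range_self j))
  set g : ℝ → ℝ := fun r => if h : r ∈ Set.Icc (0:ℝ) R then g0 ⟨r, h⟩ else 0 with hg
  refine ⟨φ, g, hφ, ?_⟩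
  have hgIcc : ∀ (r : ℝ) (h : r ∈ Set.Icc (0:ℝ) R), g r = g0 ⟨r, h⟩ := by
    intro r h
    rw [hg]
    exact dif_pos h
  have hdist0 : Tendsto (fun j => dist (G (φ j)) g0) atTop (nhds 0) :=
    tendsto_iff_dist_tendsto_zero.mp hconv
  have hup : Tendsto (fun j => R * dist (G (φ j)) g0 ^ 2) atTop (nhds 0) := by
    have h2 := (hdist0.mul hdist0).const_mul R
    simp only [mul_zero] at h2
    simpa [pow_two] using h2
  have hFcontOn : ∀ j, ContinuousOn (fun r => mfun (ρ j) r / r) (Set.Icc (0:ℝ) R) := by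
    intro j
    rw [continuousOn_iff_continuous_restrict]
    exact hFmcont j
  have hgcont : ContinuousOn g (Set.Icc (0:ℝ) R) := by
    rw [continuousOn_iff_continuous_restrict]
    have hres : (Set.Icc (0:ℝ) R).domRestrict g = fun x : X => g0 x := by
      funext x
      rw [Set.restrict_apply, hgIcc x.1 x.2]
    rw [hres]
    exact g0.continuous
  have hint2 : ∀ j, IntegrableOn (fun r => (mfun (ρ j) r / r - g r)^2) (Set.Ioc (0:ℝ) R) := by
    intro j
    apply IntegrableOn.mono_set _ Set.Ioc_subset_Icc_self
    apply ContinuousOn.integrableOn_Icc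
    exact ((hFcontOn j).sub hgcont).pow 2
  have hlow : ∀ j, 0 ≤ ∫ r in Set.Ioc (0:ℝ) R, (mfun (ρ (φ j)) r / r - g r)^2 :=
    fun j => setIntegral_nonneg measurableSet_Ioc fun r _ => sq_nonneg _
  have hhigh : ∀ j, (∫ r in Set.Ioc (0:ℝ) R, (mfun (ρ (φ j)) r / r - g r)^2)
      ≤ R * dist (G (φ j)) g0 ^ 2 := by
    intro j
    have hc : ∀ r ∈ Set.Ioc (0:ℝ) R,
        (mfun (ρ (φ j)) r / r - g r)^2 ≤ dist (G (φ j)) g0 ^ 2 := by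
      intro r hrmem
      have hmem : r ∈ Set.Icc (0:ℝ) R := Set.Ioc_subset_Icc_self hrmem
      have hle : |mfun (ρ (φ j)) r / r - g r| ≤ dist (G (φ j)) g0 := by
        rw [hgIcc r hmem]
        have h := BoundedContinuousFunction.dist_coe_le_dist
          (f := G (φ j)) (g := g0) (⟨r, hmem⟩ : X)
        rw [Real.dist_eq] at h
        exact h
      calc (mfun (ρ (φ j)) r / r - g r)^2 = |mfun (ρ (φ j)) r / r - g r|^2 := (sq_abs _).symm
        _ ≤ dist (G (φ j)) g0 ^ 2 := by
            apply pow_le_pow_left₀ (abs_nonneg _) hle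
    have hconst : IntegrableOn (fun _ : ℝ => dist (G (φ j)) g0 ^ 2) (Set.Ioc (0:ℝ) R) := by
      exact integrableOn_const (by rw [Real.volume_Ioc]; exact ENNReal.ofReal_ne_top)
    calc (∫ r in Set.Ioc (0:ℝ) R, (mfun (ρ (φ j)) r / r - g r)^2)
        ≤ ∫ _ in Set.Ioc (0:ℝ) R, dist (G (φ j)) g0 ^ 2 :=
          setIntegral_mono_on (hint2 (φ j)) hconst measurableSet_Ioc hc
      _ = R * dist (G (φ j)) g0 ^ 2 := by
          rw [setIntegral_const, Real.volume_real_Ioc_of_le hR.le, smul_eq_mul,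
            sub_zero]
  exact squeeze_zero hlow hhigh hup


end
end

section
/- Let E₀ ≥ 0, L₀ > 0, M_c > 0, 0 < k ≤ l, and let U₀: (0,∞) → ℝ be measurable with U₀ ≤ 0. Define ρ₀(r) = C(k,l) r^{2l} (E₀ − U₀(r) + M_c/r − L₀/r²)₊^{k+l+3/2}. Then ∫_{ℝ³} ρ₀ dx = ∞. -/
open MeasureTheory Real

theorem infinite_mass_if_E0_nonneg (k l L₀ M_c E₀ Ckl : ℝ) (hk : 0 < k) (hkl : k ≤ l)
    (hL₀ : 0 < L₀) (hMc : 0 < M_c) (hCkl : 0 < Ckl) (hE₀ : 0 ≤ E₀)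
    (U₀ : ℝ → ℝ) (hU₀m : Measurable U₀) (hU₀ : ∀ r, U₀ r ≤ 0)
    (ρ₀ : ℝ → ℝ)
    (hρ₀ : ∀ r > 0, ρ₀ r =
      Ckl * r ^ (2 * l) * (max (E₀ - U₀ r + M_c / r - L₀ / r ^ 2) 0) ^ (k + l + 3/2)) :
    ∫⁻ r in Set.Ioi (0:ℝ), ENNReal.ofReal (4 * π * r ^ 2 * ρ₀ r) = ⊤ := by
  set p : ℝ := k + l + 3/2 with hp
  have hp0 : 0 ≤ p := by rw [hp]; linarith
  set R : ℝ := max (2 * L₀ / M_c) 1 with hR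
  set c : ℝ := 4 * π * Ckl * (M_c / 2) ^ p with hc
  have hc0 : 0 < c := by
    have : (0:ℝ) < (M_c / 2) ^ p := Real.rpow_pos_of_pos (by positivity) p
    have hπ := Real.pi_pos
    positivity
  have key : ∀ r ∈ Set.Ioi R, ENNReal.ofReal c ≤ ENNReal.ofReal (4 * π * r ^ 2 * ρ₀ r) := by
    intro r hr
    have hr1 : (1:ℝ) ≤ r := le_of_lt (lt_of_le_of_lt (le_max_right _ _) hr)
    have hr0 : (0:ℝ) < r := lt_of_lt_of_le one_pos hr1
    have hrL : 2 * L₀ / M_c < r := lt_of_le_of_lt (le_max_left _ _) hr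
    have hL : 2 * L₀ < M_c * r := by
      rw [div_lt_iff₀ hMc] at hrL
      linarith
    have hbr : M_c / (2 * r) ≤ E₀ - U₀ r + M_c / r - L₀ / r ^ 2 := by
      have h1 : M_c / (2 * r) ≤ M_c / r - L₀ / r ^ 2 := by
        rw [div_sub_div _ _ (ne_of_gt hr0) (by positivity),
          div_le_div_iff₀ (by positivity) (by positivity)]
        nlinarith [sq_nonneg r, hr0]
      have h2 := hU₀ r
      linarith
    have hMr : (0:ℝ) < M_c / (2 * r) := by positivity
    have hmax : M_c / (2 * r) ≤ max (E₀ - U₀ r + M_c / r - L₀ / r ^ 2) 0 :=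
      le_max_of_le_left hbr
    have hpow : (M_c / (2 * r)) ^ p ≤ (max (E₀ - U₀ r + M_c / r - L₀ / r ^ 2) 0) ^ p :=
      Real.rpow_le_rpow (le_of_lt hMr) hmax hp0
    have hρ := hρ₀ r hr0
    have hrl : (0:ℝ) < r ^ (2 * l) := Real.rpow_pos_of_pos hr0 _
    have hπ := Real.pi_pos
    have hlow : c * r ^ (l - k + 1/2) ≤ 4 * π * r ^ 2 * ρ₀ r := by
      rw [hρ]
      have hid : 4 * π * r ^ 2 * (Ckl * r ^ (2 * l) * (M_c / (2 * r)) ^ p)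
          = c * r ^ (l - k + 1/2) := by
        have e1 : M_c / (2 * r) = (M_c / 2) / r := by ring
        rw [e1, Real.div_rpow (by positivity) (le_of_lt hr0)]
        have e2 : (r:ℝ) ^ (2:ℕ) = r ^ ((2:ℕ):ℝ) := (Real.rpow_natCast r 2).symm
        rw [hc]
        rw [show 4 * π * r ^ 2 * (Ckl * r ^ (2 * l) * ((M_c / 2) ^ p / r ^ p))
            = 4 * π * Ckl * (M_c / 2) ^ p * (r ^ (2:ℕ) * r ^ (2 * l) / r ^ p) by ring]
        congr 1
        rw [e2, ← Real.rpow_add hr0, ← Real.rpow_sub hr0]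
        norm_num
        ring_nf
        rw [hp]
        ring_nf
      calc c * r ^ (l - k + 1/2)
          ≤ 4 * π * r ^ 2 * (Ckl * r ^ (2 * l) * (M_c / (2 * r)) ^ p) := by
            rw [hid]
        _ ≤ 4 * π * r ^ 2 * (Ckl * r ^ (2 * l) * (max (E₀ - U₀ r + M_c / r - L₀ / r ^ 2) 0) ^ p) := by
            have hx : 0 ≤ 4 * π * r ^ 2 * (Ckl * r ^ (2 * l)) := by positivity
            nlinarith [mul_le_mul_of_nonneg_left hpow hx]
    have hge1 : (1:ℝ) ≤ r ^ (l - k + 1/2) := by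
      exact Real.one_le_rpow hr1 (by linarith)
    have : c ≤ 4 * π * r ^ 2 * ρ₀ r := by nlinarith
    exact ENNReal.ofReal_le_ofReal this
  have hsub : Set.Ioi R ⊆ Set.Ioi (0:ℝ) := by
    intro x hx
    exact lt_of_lt_of_le (lt_of_lt_of_le one_pos (le_max_right _ _)) (le_of_lt (Set.mem_Ioi.mp hx))
  have h1 : (⊤ : ENNReal) ≤ ∫⁻ r in Set.Ioi R, ENNReal.ofReal (4 * π * r ^ 2 * ρ₀ r) := by
    calc (⊤ : ENNReal) = ∫⁻ _ in Set.Ioi R, ENNReal.ofReal c := by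
          rw [setLIntegral_const, Real.volume_Ioi, ENNReal.mul_top]
          simpa using hc0.not_ge
      _ ≤ _ := setLIntegral_mono' measurableSet_Ioi key
  have h2 : ∫⁻ r in Set.Ioi R, ENNReal.ofReal (4 * π * r ^ 2 * ρ₀ r)
      ≤ ∫⁻ r in Set.Ioi (0:ℝ), ENNReal.ofReal (4 * π * r ^ 2 * ρ₀ r) :=
    lintegral_mono_set hsub
  exact top_le_iff.mp (le_trans h1 h2)
end
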